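/- Let A be an algebra in the variety R (satisfying [[a,b],c]=0, (ab)a=0, (ab)(cd)=0). Then for all x,y,z,s,k,t in A, V_{x,y} L_s V_{k,t} = 0 as operators; in element form: ((k·(s·((x u) y)))·t = 0 for all u, i.e., (k(s v))t = 0 where v = (xu)y. -/
import Mathlib


theorem stmt {F A : Type*} [Field F] [NonUnitalNonAssocRing A] [Module F A]
    [SMulCommClass F A A] [IsScalarTower F A A]
    (h1 : ∀ a b c : A, (a * b - b * a) * c - c * (a * b - b * a) = 0)
    (h2 : ∀ a b : A, (a * b) * a = 0)
    (h3 : ∀ a b c d : A, (a * b) * (c * d) = 0) :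
    ∀ u x y s k t : A, (k * (s * ((x * u) * y))) * t = 0 := by
  intro u x y s k t
  have lin : ∀ a b c : A, (a * b) * c + (c * b) * a = 0 := by
    intro a b c
    have h := h2 (a + c) b
    simp only [add_mul, mul_add] at h
    rw [h2 a b, h2 c b] at h
    rw [zero_add, add_zero] at h
    rw [add_comm] at h; exact h
  set v := (x * u) * y with hv
  have hvs : v * s = 0 := by
    have h := lin (x * u) y s
    rw [h3 s y x u, add_zero] at h
    exact h
  have central : (s * v) * k = k * (s * v) := by
    have h := h1 s v k
    rw [hvs, sub_zero] at h
    exact sub_eq_zero.mp h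
  rw [← central]
  have h := lin (s * v) k t
  rw [h3 t k s v, add_zero] at h
  exact h
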